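/- arXiv:1004.2080 — 12 statements merged into one kernel-verified Lean document; each statement's English description precedes it below -/
import Mathlib

section
/- Let (V, [·,…,·], (α₁,…,α_{n−1})) be an n-ary Hom-algebra over a field k of characteristic 0 and let β : V → V be a weak morphism. Define the twisted n-ary product [x₁,…,xₙ]_β = β([x₁,…,xₙ]) and twisting maps (βα₁,…,βα_{n−1}), giving the n-ary Hom-algebra V_β. Then: (1) the n-ary Hom-Jacobian of V_β satisfies J^n_{V_β} = β² ∘ J^n_V; (2) if [·,…,·] is anti-symmetric then so is [·,…,·]_β; (3) if V is multiplicative and βα = αβ, then V_β is multiplicative. -/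
open scoped BigOperators

/-- The sum appearing on the right-hand side of the `(m+1)`-ary Hom-Nambu identity
for an `(m+1)`-ary product `br` with twisting maps `α₁, …, α_m`. -/
def nambuRHS {V : Type*} [AddCommGroup V] {m : ℕ}
    (br : (Fin (m + 1) → V) → V) (α : Fin m → V → V)
    (x : Fin m → V) (y : Fin (m + 1) → V) : V :=
  ∑ i : Fin (m + 1), br (fun j =>
    if h : (j : ℕ) < (i : ℕ) then
      α ⟨j, by have := i.isLt; omega⟩ (y j)
    else if h2 : (j : ℕ) = (i : ℕ) then
      br (Fin.snoc x (y i))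
    else
      α ⟨(j : ℕ) - 1, by have := j.isLt; omega⟩ (y j))

/-- The `(m+1)`-ary Hom-Jacobian `J(x₁,…,x_m; y₁,…,y_{m+1})`. -/
def homJacobian {V : Type*} [AddCommGroup V] {m : ℕ}
    (br : (Fin (m + 1) → V) → V) (α : Fin m → V → V)
    (x : Fin m → V) (y : Fin (m + 1) → V) : V :=
  br (Fin.snoc (fun i => α i (x i)) (br y)) - nambuRHS br α x y

/-- Twisting an `n`-ary Hom-algebra `(V, br, (α₁,…,α_{n-1}))`
(`n = m + 1 ≥ 2`) by a weak morphism `β`: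
(1) the Hom-Jacobian of `V_β` equals `β² ∘ J_V`;
(2) anti-symmetry of the product is preserved;
(3) if `V` is multiplicative (all twisting maps equal `a`, `a ∘ br = br ∘ a^{⊗n}`)
and `β` commutes with `a`, then `V_β` is multiplicative. -/
theorem narity_twist_lemma
    {k V : Type*} [Field k] [CharZero k] [AddCommGroup V] [Module k V]
    {m : ℕ} (hm : 1 ≤ m)
    (br : MultilinearMap k (fun _ : Fin (m + 1) => V) V)
    (α : Fin m → V →ₗ[k] V) (β : V →ₗ[k] V)
    (hβ : ∀ x : Fin (m + 1) → V, β (br x) = br (fun i => β (x i))) :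
    -- (1)  J_{V_β} = β² ∘ J_V
    (∀ (x : Fin m → V) (y : Fin (m + 1) → V),
      homJacobian (fun v => β (br v)) (fun i v => β (α i v)) x y
        = β (β (homJacobian (fun v => br v) (fun i v => α i v) x y))) ∧
    -- (2)  anti-symmetry is preserved
    ((∀ (σ : Equiv.Perm (Fin (m + 1))) (x : Fin (m + 1) → V),
        br x = (Equiv.Perm.sign σ : ℤ) • br (fun i => x (σ i))) →
      ∀ (σ : Equiv.Perm (Fin (m + 1))) (x : Fin (m + 1) → V),
        β (br x) = (Equiv.Perm.sign σ : ℤ) • β (br (fun i => x (σ i)))) ∧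
    -- (3)  multiplicativity is preserved when βα = αβ
    (∀ a : V →ₗ[k] V, (∀ i, α i = a) →
      (∀ x : Fin (m + 1) → V, a (br x) = br (fun i => a (x i))) →
      β ∘ₗ a = a ∘ₗ β →
      ∀ x : Fin (m + 1) → V,
        β (a (β (br x))) = β (br (fun i => β (a (x i))))) := by
  have key : ∀ w : Fin (m + 1) → V, β (br (fun j => β (w j))) = β (β (br w)) := by
    intro w
    rw [hβ w]
  refine ⟨?_, ?_, ?_⟩
  · intro x y
    simp only [homJacobian, nambuRHS, map_sub, map_sum]
    congr 1
    · have h1 : (Fin.snoc (fun i => β (α i (x i))) (β (br y)) : Fin (m + 1) → V)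
          = fun j => β ((Fin.snoc (fun i => α i (x i)) (br y) : Fin (m + 1) → V) j) := by
        funext j
        refine Fin.lastCases ?_ ?_ j
        · simp
        · intro i; simp
      rw [h1, key]
    · refine Finset.sum_congr rfl ?_
      intro i _
      have h2 : (fun j : Fin (m + 1) =>
          if h : (j : ℕ) < (i : ℕ) then
            β (α ⟨j, by have := i.isLt; omega⟩ (y j))
          else if h2 : (j : ℕ) = (i : ℕ) then
            β (br (Fin.snoc x (y i)))
          else
            β (α ⟨(j : ℕ) - 1, by have := j.isLt; omega⟩ (y j)))
          = fun j : Fin (m + 1) => β (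
            if h : (j : ℕ) < (i : ℕ) then
              α ⟨j, by have := i.isLt; omega⟩ (y j)
            else if h2 : (j : ℕ) = (i : ℕ) then
              br (Fin.snoc x (y i))
            else
              α ⟨(j : ℕ) - 1, by have := j.isLt; omega⟩ (y j)) := by
        funext j
        split_ifs <;> rfl
      rw [h2, key]
  · intro hanti σ x
    rw [hanti σ x, map_zsmul]
  · intro a _ ha hcomm x
    have hc : ∀ v, β (a v) = a (β v) := fun v => LinearMap.congr_fun hcomm v
    rw [← hc, ha x, hβ]
end

section
/- Let (V, [·,…,·], (α₁,…,α_{n−1})) be an n-ary Hom-Nambu algebra over a field k of characteristic 0 and let β : V → V be a weak morphism. Then V_β = (V, β∘[·,…,·], (βα₁,…,βα_{n−1})) is an n-ary Hom-Nambu algebra; if moreover the product of V is anti-symmetric (i.e., V is an n-ary Hom-Nambu-Lie algebra), then V_β is an n-ary Hom-Nambu-Lie algebra; and if V is multiplicative and βα = αβ, then V_β is multiplicative. -/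
open scoped BigOperators

/-- If `(V, br, (α₁,…,α_{n-1}))` (`n = m+1 ≥ 2`) is an `n`-ary
Hom-Nambu algebra and `β` is a weak morphism, then
`V_β = (V, β ∘ br, (βα₁,…,βα_{n-1}))` is an `n`-ary Hom-Nambu algebra;
if the product of `V` is anti-symmetric then so is that of `V_β`
(i.e. `V_β` is Hom-Nambu-Lie); and if `V` is multiplicative and `βα = αβ`,
then `V_β` is multiplicative. -/
theorem narity_twist_homNambu
    {k V : Type*} [Field k] [CharZero k] [AddCommGroup V] [Module k V]
    {m : ℕ} (hm : 1 ≤ m)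
    (br : MultilinearMap k (fun _ : Fin (m + 1) => V) V)
    (α : Fin m → V →ₗ[k] V) (β : V →ₗ[k] V)
    (hβ : ∀ x : Fin (m + 1) → V, β (br x) = br (fun i => β (x i)))
    (hNambu : ∀ (x : Fin m → V) (y : Fin (m + 1) → V),
      homJacobian (fun v => br v) (fun i v => α i v) x y = 0) :
    -- V_β is an n-ary Hom-Nambu algebra
    (∀ (x : Fin m → V) (y : Fin (m + 1) → V),
      homJacobian (fun v => β (br v)) (fun i v => β (α i v)) x y = 0) ∧
    -- if the product is anti-symmetric, so is the twisted product
    ((∀ (σ : Equiv.Perm (Fin (m + 1))) (x : Fin (m + 1) → V),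
        br x = (Equiv.Perm.sign σ : ℤ) • br (fun i => x (σ i))) →
      ∀ (σ : Equiv.Perm (Fin (m + 1))) (x : Fin (m + 1) → V),
        β (br x) = (Equiv.Perm.sign σ : ℤ) • β (br (fun i => x (σ i)))) ∧
    -- if V is multiplicative and βα = αβ, then V_β is multiplicative
    (∀ a : V →ₗ[k] V, (∀ i, α i = a) →
      (∀ x : Fin (m + 1) → V, a (br x) = br (fun i => a (x i))) →
      β ∘ₗ a = a ∘ₗ β →
      ∀ x : Fin (m + 1) → V,
        β (a (β (br x))) = β (br (fun i => β (a (x i))))) := by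

  have key : ∀ z : Fin (m+1) → V, β (br (fun i => β (z i))) = β (β (br z)) := by
    intro z; conv_rhs => rw [hβ z]
  refine ⟨?_, ?_, ?_⟩
  · intro x y
    have h1 : homJacobian (fun v => β (br v)) (fun i v => β (α i v)) x y
        = β (β (homJacobian (fun v => br v) (fun i v => α i v) x y)) := by
      unfold homJacobian nambuRHS
      rw [map_sub, map_sub, map_sum, map_sum]
      congr 1
      · have e : (Fin.snoc (fun i => β ((α i) (x i))) (β (br y)) : Fin (m+1) → V)
            = fun j => β ((Fin.snoc (fun i => (α i) (x i)) (br y) : Fin (m+1) → V) j) := by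
          funext j
          refine Fin.lastCases ?_ ?_ j
          · simp
          · intro i; simp
        rw [e]; exact key _
      · refine Finset.sum_congr rfl (fun i _ => ?_)
        have e : (fun j : Fin (m+1) =>
            if h : (j : ℕ) < (i : ℕ) then
              β ((α ⟨j, by have := i.isLt; omega⟩) (y j))
            else if h2 : (j : ℕ) = (i : ℕ) then
              β (br (Fin.snoc x (y i)))
            else
              β ((α ⟨(j : ℕ) - 1, by have := j.isLt; omega⟩) (y j)))
            = fun j : Fin (m+1) => β (
            if h : (j : ℕ) < (i : ℕ) then
              (α ⟨j, by have := i.isLt; omega⟩) (y j)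
            else if h2 : (j : ℕ) = (i : ℕ) then
              br (Fin.snoc x (y i))
            else
              (α ⟨(j : ℕ) - 1, by have := j.isLt; omega⟩) (y j)) := by
          funext j
          split_ifs <;> rfl
        rw [e]; exact key _
    rw [h1, hNambu, map_zero, map_zero]
  · intro hanti σ x
    rw [hanti σ x, map_zsmul]
  · intro a _ hab hcomm x
    have hc : ∀ v, β (a v) = a (β v) := fun v => congrFun (congrArg DFunLike.coe hcomm) v
    calc β (a (β (br x))) = β (β (a (br x))) := by rw [← hc]
      _ = β (β (br (fun i => a (x i)))) := by rw [hab]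
      _ = β (br (fun i => β (a (x i)))) := by rw [hβ]
end

section
/- If (V, [·,…,·], α) is a multiplicative n-ary Hom-Nambu algebra over a field k of characteristic 0, then V_α = (V, α∘[·,…,·], α²) is also a multiplicative n-ary Hom-Nambu algebra; and if in addition the product of V is anti-symmetric, then V_α is a multiplicative n-ary Hom-Nambu-Lie algebra. -/
open scoped BigOperators

/-- If `(V, br, α)` is a multiplicative `n`-ary Hom-Nambu
algebra (`n = m+1 ≥ 2`), then `V_α = (V, α ∘ br, α²)` is a multiplicative
`n`-ary Hom-Nambu algebra; and if the product of `V` is anti-symmetric then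
`V_α` is a multiplicative `n`-ary Hom-Nambu-Lie algebra. -/
theorem narity_twist_by_alpha
    {k V : Type*} [Field k] [CharZero k] [AddCommGroup V] [Module k V]
    {m : ℕ} (hm : 1 ≤ m)
    (br : MultilinearMap k (fun _ : Fin (m + 1) => V) V)
    (α : V →ₗ[k] V)
    (hmul : ∀ x : Fin (m + 1) → V, α (br x) = br (fun i => α (x i)))
    (hNambu : ∀ (x : Fin m → V) (y : Fin (m + 1) → V),
      homJacobian (fun v => br v) (fun _ v => α v) x y = 0) :
    -- V_α satisfies the n-ary Hom-Nambu identity with twisting maps α²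
    (∀ (x : Fin m → V) (y : Fin (m + 1) → V),
      homJacobian (fun v => α (br v)) (fun _ v => α (α v)) x y = 0) ∧
    -- V_α is multiplicative: α² ∘ (α ∘ br) = (α ∘ br) ∘ (α²)^{⊗ n}
    (∀ x : Fin (m + 1) → V,
      α (α (α (br x))) = α (br (fun i => α (α (x i))))) ∧
    -- if the product is anti-symmetric, so is the product of V_α
    ((∀ (σ : Equiv.Perm (Fin (m + 1))) (x : Fin (m + 1) → V),
        br x = (Equiv.Perm.sign σ : ℤ) • br (fun i => x (σ i))) →
      ∀ (σ : Equiv.Perm (Fin (m + 1))) (x : Fin (m + 1) → V),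
        α (br x) = (Equiv.Perm.sign σ : ℤ) • α (br (fun i => x (σ i)))) := by

  have key : ∀ (x : Fin m → V) (y : Fin (m + 1) → V),
      homJacobian (fun v => α (br v)) (fun _ v => α (α v)) x y
        = α (α (homJacobian (fun v => br v) (fun _ v => α v) x y)) := by
    intro x y
    unfold homJacobian nambuRHS
    rw [map_sub, map_sub, map_sum, map_sum]
    congr 1
    · simp only [hmul]
      refine congrArg _ (funext fun i => ?_)
      refine Fin.lastCases ?_ (fun j => ?_) i
      · simp [Fin.snoc_last, hmul]
      · simp [Fin.snoc_castSucc]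
    · refine Finset.sum_congr rfl fun i _ => ?_
      simp only [hmul]
      refine congrArg _ (funext fun j => ?_)
      by_cases h1 : (j : ℕ) < (i : ℕ)
      · simp [h1]
      · by_cases h2 : (j : ℕ) = (i : ℕ)
        · simp [h1, h2, hmul]
        · simp [h1, h2]
  refine ⟨fun x y => by rw [key, hNambu, map_zero, map_zero], fun x => by rw [hmul, hmul],
    fun hanti σ x => by rw [hanti σ x, map_zsmul]⟩
end

section
/- Let (V, [·,…,·]) be an n-ary Nambu algebra over a field k of characteristic 0 and β : V → V a morphism of n-ary algebras (β([x₁,…,xₙ]) = [β(x₁),…,β(xₙ)]). Then V_β = (V, β∘[·,…,·], β) with all n−1 twisting maps equal to β is a multiplicative n-ary Hom-Nambu algebra; if moreover the product of V is anti-symmetric, then V_β is a multiplicative n-ary Hom-Nambu-Lie algebra. -/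
open scoped BigOperators

/-- If `(V, br)` is an `n`-ary Nambu algebra (`n = m+1 ≥ 2`)
and `β` is a morphism of `n`-ary algebras, then `V_β = (V, β ∘ br, β)` is a
multiplicative `n`-ary Hom-Nambu algebra; if moreover the product of `V` is
anti-symmetric, then `V_β` is a multiplicative `n`-ary Hom-Nambu-Lie algebra. -/
theorem narity_twist_nambu
    {k V : Type*} [Field k] [CharZero k] [AddCommGroup V] [Module k V]
    {m : ℕ} (hm : 1 ≤ m)
    (br : MultilinearMap k (fun _ : Fin (m + 1) => V) V)
    (β : V →ₗ[k] V)
    (hβ : ∀ x : Fin (m + 1) → V, β (br x) = br (fun i => β (x i)))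
    (hNambu : ∀ (x : Fin m → V) (y : Fin (m + 1) → V),
      homJacobian (fun v => br v) (fun _ v => v) x y = 0) :
    -- V_β satisfies the n-ary Hom-Nambu identity with all twisting maps β
    (∀ (x : Fin m → V) (y : Fin (m + 1) → V),
      homJacobian (fun v => β (br v)) (fun _ v => β v) x y = 0) ∧
    -- V_β is multiplicative: β ∘ (β ∘ br) = (β ∘ br) ∘ β^{⊗ n}
    (∀ x : Fin (m + 1) → V,
      β (β (br x)) = β (br (fun i => β (x i)))) ∧
    -- if the product is anti-symmetric, so is the product of V_β
    ((∀ (σ : Equiv.Perm (Fin (m + 1))) (x : Fin (m + 1) → V),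
        br x = (Equiv.Perm.sign σ : ℤ) • br (fun i => x (σ i))) →
      ∀ (σ : Equiv.Perm (Fin (m + 1))) (x : Fin (m + 1) → V),
        β (br x) = (Equiv.Perm.sign σ : ℤ) • β (br (fun i => x (σ i)))) := by
  have hsnoc : ∀ (x : Fin m → V) (v : V),
      (fun i => β ((Fin.snoc x v : Fin (m+1) → V) i)) = (Fin.snoc (fun i => β (x i)) (β v) : Fin (m+1) → V) := by
    intro x v
    funext j
    refine Fin.lastCases ?_ ?_ j
    · simp
    · intro j; simp
  refine ⟨?_, ?_, ?_⟩
  · intro x y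
    have key : homJacobian (fun v => β (br v)) (fun _ v => β v) x y
        = β (β (homJacobian (fun v => br v) (fun _ v => v) x y)) := by
      unfold homJacobian nambuRHS
      rw [map_sub, map_sub, map_sum, map_sum]
      congr 1
      · conv_rhs => rw [hβ (Fin.snoc x (br y)), hsnoc]
      · refine Finset.sum_congr rfl fun i _ => ?_
        rw [hβ]
        congr 1
        funext j
        simp only [apply_dite (β)]
    rw [key, hNambu, map_zero, map_zero]
  · intro x
    rw [hβ x]
  · intro hanti σ x
    rw [hanti σ x, map_zsmul]
end

section
/- Let (V, (·,·,·), (α₁,α₂)) be a ternary totally Hom-associative algebra over a field k of characteristic 0 and β : V → V a weak morphism (β((x,y,z)) = (β(x),β(y),β(z)) for all x,y,z). Then V_β = (V, β∘(·,·,·), (βα₁, βα₂)) is a ternary totally Hom-associative algebra; and if V is multiplicative and βα = αβ, then V_β is multiplicative. -/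
/-- If `(V, t, (α₁, α₂))` is a ternary totally Hom-associative
algebra and `β` is a weak morphism, then `V_β = (V, β ∘ t, (βα₁, βα₂))` is a
ternary totally Hom-associative algebra; and if `V` is multiplicative and
`βα = αβ`, then `V_β` is multiplicative. -/
theorem twist_ternary_totally_homAssociative
    {k A : Type*} [Field k] [CharZero k] [AddCommGroup A] [Module k A]
    (t : A →ₗ[k] A →ₗ[k] A →ₗ[k] A) (α₁ α₂ β : A →ₗ[k] A)
    (hassoc : ∀ u v w x y : A,
      t (t u v w) (α₁ x) (α₂ y) = t (α₁ u) (t v w x) (α₂ y) ∧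
      t (α₁ u) (t v w x) (α₂ y) = t (α₁ u) (α₂ v) (t w x y))
    (hβ : ∀ x y z : A, β (t x y z) = t (β x) (β y) (β z)) :
    -- V_β is ternary totally Hom-associative
    (∀ u v w x y : A,
      β (t (β (t u v w)) (β (α₁ x)) (β (α₂ y)))
        = β (t (β (α₁ u)) (β (t v w x)) (β (α₂ y))) ∧
      β (t (β (α₁ u)) (β (t v w x)) (β (α₂ y)))
        = β (t (β (α₁ u)) (β (α₂ v)) (β (t w x y)))) ∧
    -- if V is multiplicative and βα = αβ, then V_β is multiplicative
    (∀ a : A →ₗ[k] A, α₁ = a → α₂ = a →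
      (∀ x y z : A, a (t x y z) = t (a x) (a y) (a z)) →
      β ∘ₗ a = a ∘ₗ β →
      ∀ x y z : A,
        β (a (β (t x y z))) = β (t (β (a x)) (β (a y)) (β (a z)))) := by
  constructor
  · intro u v w x y
    refine ⟨?_, ?_⟩ <;> simp only [← hβ]
    · exact congrArg β (congrArg β (hassoc u v w x y).1)
    · exact congrArg β (congrArg β (hassoc u v w x y).2)
  · intro a _ _ ha hcomm x y z
    have hc : ∀ v : A, β (a v) = a (β v) := fun v =>
      congrFun (congrArg (fun f => (DFunLike.coe f : A → A)) hcomm) v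
    simp only [← hβ, ← ha, ← hc]
end

section
/- Let (V, {·,·,·}, (α₁,α₂)) be a Hom-Jordan triple system over a field k of characteristic 0 and β : V → V a weak morphism (β({x,y,z}) = {β(x),β(y),β(z)} for all x,y,z). Then V_β = (V, β∘{·,·,·}, (βα₁, βα₂)) is a Hom-Jordan triple system; and if V is multiplicative and βα = αβ, then V_β is multiplicative. -/
/-- If `(V, T, (α₁, α₂))` is a Hom-Jordan triple system and
`β` is a weak morphism, then `V_β = (V, β ∘ T, (βα₁, βα₂))` is a Hom-Jordan
triple system; and if `V` is multiplicative and `βα = αβ`, then `V_β` is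
multiplicative. -/
theorem twist_homJordan_triple_system
    {k J : Type*} [Field k] [CharZero k] [AddCommGroup J] [Module k J]
    (T : J →ₗ[k] J →ₗ[k] J →ₗ[k] J) (α₁ α₂ β : J →ₗ[k] J)
    (houter : ∀ x y z : J, T x y z = T z y x)
    (hJordan : ∀ u v w x y : J,
      T (α₁ x) (α₂ y) (T u v w) - T (α₁ u) (α₂ v) (T x y w)
        = T (T x y u) (α₁ v) (α₂ w) - T (α₁ u) (T y x v) (α₂ w))
    (hβ : ∀ x y z : J, β (T x y z) = T (β x) (β y) (β z)) :
    -- outer-symmetry of the twisted product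
    (∀ x y z : J, β (T x y z) = β (T z y x)) ∧
    -- the Hom-Jordan triple identity for V_β
    (∀ u v w x y : J,
      β (T (β (α₁ x)) (β (α₂ y)) (β (T u v w)))
        - β (T (β (α₁ u)) (β (α₂ v)) (β (T x y w)))
        = β (T (β (T x y u)) (β (α₁ v)) (β (α₂ w)))
          - β (T (β (α₁ u)) (β (T y x v)) (β (α₂ w)))) ∧
    -- if V is multiplicative and βα = αβ, then V_β is multiplicative
    (∀ a : J →ₗ[k] J, α₁ = a → α₂ = a →
      (∀ x y z : J, a (T x y z) = T (a x) (a y) (a z)) →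
      β ∘ₗ a = a ∘ₗ β →
      ∀ x y z : J,
        β (a (β (T x y z))) = β (T (β (a x)) (β (a y)) (β (a z)))) := by
  refine ⟨fun x y z => by rw [houter], ?_, ?_⟩
  · intro u v w x y
    have key : ∀ p q r : J, β (T (β p) (β q) (β r)) = β (β (T p q r)) := by
      intro p q r; rw [hβ p q r]
    rw [key, key, key, key, ← map_sub, ← map_sub, ← map_sub, ← map_sub,
      hJordan]
  · intro a h1 h2 ha hcomm x y z
    have hc : ∀ w : J, β (a w) = a (β w) := fun w =>
      congrFun (congrArg DFunLike.coe hcomm) w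
    rw [hβ, ha, ← hc, ← hc, ← hc]
end

section
/- Let (V, [·,·,·], (α₁,α₂)) be a Hom-Lie triple system over a field k of characteristic 0 and β : V → V a weak morphism (β([x,y,z]) = [β(x),β(y),β(z)] for all x,y,z). Then V_β = (V, β∘[·,·,·], (βα₁, βα₂)) is a Hom-Lie triple system; and if V is multiplicative and βα = αβ, then V_β is multiplicative. -/
/-- If `(V, T, (α₁, α₂))` is a Hom-Lie triple system and `β`
is a weak morphism, then `V_β = (V, β ∘ T, (βα₁, βα₂))` is a Hom-Lie triple
system; and if `V` is multiplicative and `βα = αβ`, then `V_β` is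
multiplicative. -/
theorem twist_homLie_triple_system
    {k L : Type*} [Field k] [CharZero k] [AddCommGroup L] [Module k L]
    (T : L →ₗ[k] L →ₗ[k] L →ₗ[k] L) (α₁ α₂ β : L →ₗ[k] L)
    (hskew : ∀ u v w : L, T u v w = - T v u w)
    (hjacobi : ∀ u v w : L, T u v w + T w u v + T v w u = 0)
    (hNambu : ∀ u v w x y : L,
      T (α₁ x) (α₂ y) (T u v w)
        = T (T x y u) (α₁ v) (α₂ w) + T (α₁ u) (T x y v) (α₂ w)
          + T (α₁ u) (α₂ v) (T x y w))
    (hβ : ∀ x y z : L, β (T x y z) = T (β x) (β y) (β z)) :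
    -- left anti-symmetry of the twisted product
    (∀ u v w : L, β (T u v w) = - β (T v u w)) ∧
    -- the ternary Jacobi identity for the twisted product
    (∀ u v w : L, β (T u v w) + β (T w u v) + β (T v w u) = 0) ∧
    -- the ternary Hom-Nambu identity for V_β
    (∀ u v w x y : L,
      β (T (β (α₁ x)) (β (α₂ y)) (β (T u v w)))
        = β (T (β (T x y u)) (β (α₁ v)) (β (α₂ w)))
          + β (T (β (α₁ u)) (β (T x y v)) (β (α₂ w)))
          + β (T (β (α₁ u)) (β (α₂ v)) (β (T x y w)))) ∧
    -- if V is multiplicative and βα = αβ, then V_β is multiplicative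
    (∀ a : L →ₗ[k] L, α₁ = a → α₂ = a →
      (∀ x y z : L, a (T x y z) = T (a x) (a y) (a z)) →
      β ∘ₗ a = a ∘ₗ β →
      ∀ x y z : L,
        β (a (β (T x y z))) = β (T (β (a x)) (β (a y)) (β (a z)))) := by
  refine ⟨fun u v w => by rw [hskew u v w, map_neg],
    fun u v w => by rw [← map_add, ← map_add, hjacobi, map_zero],
    fun u v w x y => ?_,
    fun a h1 h2 ha hcomm x y z => ?_⟩
  · rw [← hβ, ← hβ, hNambu]
    simp only [map_add, hβ]
  · have hc : ∀ t : L, β (a t) = a (β t) := fun t => LinearMap.congr_fun hcomm t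
    rw [show β (a (β (T x y z))) = β (β (a (T x y z))) from congrArg β (hc _).symm,
      ha, hβ, hβ]
end

section
/- Let (A, μ) be a Maltsev algebra over a field k of characteristic 0 and α : A → A an algebra morphism (α(xy) = α(x)α(y)). Define the triple product [x,y,z] = 2(xy)z − (zx)y − (yz)x. Then A_α = (A, α∘[·,·,·], α) is a multiplicative Hom-Lie triple system. -/
/-- The twisted Loos triple product `[x,y,z] = α(2(xy)z − (zx)y − (yz)x)`. -/
def loosTripleTwist {k A : Type*} [Field k] [AddCommGroup A] [Module k A]
    (mul : A →ₗ[k] A →ₗ[k] A) (α : A →ₗ[k] A) (x y z : A) : A :=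
  α ((2 : ℤ) • mul (mul x y) z - mul (mul z x) y - mul (mul y z) x)

set_option maxRecDepth 100000
set_option maxHeartbeats 16000000

/-- The untwisted Loos triple product. -/
def loosT {k A : Type*} [Field k] [AddCommGroup A] [Module k A]
    (mul : A →ₗ[k] A →ₗ[k] A) (x y z : A) : A :=
  (2 : ℤ) • mul (mul x y) z - mul (mul z x) y - mul (mul y z) x

theorem loos_key {k A : Type*} [Field k] [CharZero k] [AddCommGroup A] [Module k A]
    (mul : A →ₗ[k] A →ₗ[k] A)
    (hanti : ∀ x y : A, mul x y = - mul y x)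
    (hmaltsev : ∀ x y z : A,
      (mul (mul x y) (mul x z) + mul (mul (mul x z) x) y
          + mul (mul y (mul x z)) x)
        = mul (mul (mul x y) z + mul (mul z x) y + mul (mul y z) x) x)
    (u v w x y : A) :
    loosT mul x y (loosT mul u v w)
      = loosT mul (loosT mul x y u) v w + loosT mul u (loosT mul x y v) w
        + loosT mul u v (loosT mul x y w) := by
  have hlin : ∀ p q r s : A, (mul (mul p r) (mul q s)) + (mul (mul q r) (mul p s)) + (mul (mul (mul p s) q) r) + (mul (mul (mul q s) p) r) + (mul (mul r (mul p s)) q) + (mul (mul r (mul q s)) p) = (mul (mul (mul p r) s) q) + (mul (mul (mul q r) s) p) + (mul (mul (mul s p) r) q) + (mul (mul (mul s q) r) p) + (mul (mul (mul r s) p) q) + (mul (mul (mul r s) q) p) := by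
    intro p q r s
    linear_combination (norm := (simp only [map_add, LinearMap.add_apply]; module))
      hmaltsev (p + q) r s - hmaltsev p r s - hmaltsev q r s
  have hlinB : ∀ p q r s e : A, (mul (mul (mul p r) (mul q s)) e) + (mul (mul (mul q r) (mul p s)) e) + (mul (mul (mul (mul p s) q) r) e) + (mul (mul (mul (mul q s) p) r) e) + (mul (mul (mul r (mul p s)) q) e) + (mul (mul (mul r (mul q s)) p) e) = (mul (mul (mul (mul p r) s) q) e) + (mul (mul (mul (mul q r) s) p) e) + (mul (mul (mul (mul s p) r) q) e) + (mul (mul (mul (mul s q) r) p) e) + (mul (mul (mul (mul r s) p) q) e) + (mul (mul (mul (mul r s) q) p) e) := by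
    intro p q r s e
    have h := congrArg (fun t => mul t e) (hlin p q r s)
    simpa only [map_add, map_sub, map_neg, LinearMap.add_apply, LinearMap.sub_apply,
      LinearMap.neg_apply] using h
  have fp0 : ∀ s0 s1 a b : A, (mul s0 (mul (mul a b) s1)) = - (mul s0 (mul (mul b a) s1)) := by
    intro s0 s1 a b
    rw [hanti a b]; simp only [map_neg, LinearMap.neg_apply]
  have fp1 : ∀ s0 a b : A, (mul (mul a b) s0) = - (mul (mul b a) s0) := by
    intro s0 a b
    rw [hanti a b]; simp only [map_neg, LinearMap.neg_apply]
  have fp2 : ∀ s0 s1 s2 a b : A, (mul (mul s1 (mul (mul a b) s2)) s0) = - (mul (mul s1 (mul (mul b a) s2)) s0) := by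
    intro s0 s1 s2 a b
    rw [hanti a b]; simp only [map_neg, LinearMap.neg_apply]
  have fp3 : ∀ s0 s1 s2 a b : A, (mul (mul (mul (mul a b) s2) s1) s0) = - (mul (mul (mul (mul b a) s2) s1) s0) := by
    intro s0 s1 s2 a b
    rw [hanti a b]; simp only [map_neg, LinearMap.neg_apply]
  have fp4 : ∀ s0 s1 a b : A, (mul (mul (mul a b) s1) s0) = - (mul (mul (mul b a) s1) s0) := by
    intro s0 s1 a b
    rw [hanti a b]; simp only [map_neg, LinearMap.neg_apply]
  have fp5 : ∀ s0 a b : A, (mul s0 (mul a b)) = - (mul s0 (mul b a)) := by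
    intro s0 a b
    rw [hanti a b]; simp only [map_neg, LinearMap.neg_apply]
  have fp6 : ∀ s0 s1 a b : A, (mul (mul s1 (mul a b)) s0) = - (mul (mul s1 (mul b a)) s0) := by
    intro s0 s1 a b
    rw [hanti a b]; simp only [map_neg, LinearMap.neg_apply]
  have fp7 : ∀ s0 s1 s2 a b : A, (mul (mul (mul s2 (mul a b)) s1) s0) = - (mul (mul (mul s2 (mul b a)) s1) s0) := by
    intro s0 s1 s2 a b
    rw [hanti a b]; simp only [map_neg, LinearMap.neg_apply]
  linear_combination (norm := (simp only [loosT, map_add, map_sub, map_neg, LinearMap.add_apply, LinearMap.sub_apply, LinearMap.neg_apply, two_zsmul]; abel))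
      ((4 : ℤ)) • hlin (mul x y) u v w +
      ((4 : ℤ)) • hlin (mul x y) u w v +
      ((2 : ℤ)) • hlin (mul x y) v u w +
      ((6 : ℤ)) • hlin (mul x y) w u v +
      ((2 : ℤ)) • hlin (mul x y) v w u +
      ((-1 : ℤ)) • hlin x (mul u y) v w +
      ((-2 : ℤ)) • hlin x (mul u y) w v +
      ((1 : ℤ)) • hlin x (mul v y) u w +
      ((-2 : ℤ)) • hlin x y (mul u v) w +
      ((-1 : ℤ)) • hlin x (mul w y) u v +
      ((2 : ℤ)) • hlin x y (mul u w) v +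
      ((2 : ℤ)) • hlin x y u (mul v w) +
      ((2 : ℤ)) • hlin x (mul v y) w u +
      ((1 : ℤ)) • hlin x (mul w y) v u +
      ((-1 : ℤ)) • hlin (mul u x) v y w +
      ((-2 : ℤ)) • hlin (mul u x) w y v +
      ((1 : ℤ)) • hlin (mul v x) u y w +
      ((-4 : ℤ)) • hlin x (mul u v) y w +
      ((1 : ℤ)) • hlin x u (mul v y) w +
      ((-1 : ℤ)) • hlin (mul w x) u y v +
      ((4 : ℤ)) • hlin x (mul u w) y v +
      ((-1 : ℤ)) • hlin x u (mul w y) v +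
      ((4 : ℤ)) • hlin x u y (mul v w) +
      ((-1 : ℤ)) • hlin x v (mul u y) w +
      ((-2 : ℤ)) • hlin x w (mul u y) v +
      ((2 : ℤ)) • hlin (mul v x) w y u +
      ((1 : ℤ)) • hlin (mul w x) v y u +
      ((-2 : ℤ)) • hlin x (mul v w) y u +
      ((1 : ℤ)) • hlin x v (mul w y) u +
      ((-2 : ℤ)) • hlin x v y (mul u w) +
      ((2 : ℤ)) • hlin x w (mul v y) u +
      ((2 : ℤ)) • hlin x w y (mul u v) +
      ((-2 : ℤ)) • hlin x (mul u v) w y +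
      ((2 : ℤ)) • hlin x (mul u w) v y +
      ((2 : ℤ)) • hlin x u (mul v w) y +
      ((1 : ℤ)) • hlinB y u v w x +
      ((-2 : ℤ)) • hlinB y u w v x +
      ((-1 : ℤ)) • hlinB y v u w x +
      ((2 : ℤ)) • hlinB y v w u x +
      ((-1 : ℤ)) • hlinB x u v w y +
      ((2 : ℤ)) • hlinB x u w v y +
      ((1 : ℤ)) • hlinB x v u w y +
      ((-2 : ℤ)) • hlinB x v w u y +
      ((-2 : ℤ)) • fp0 (mul x y) v w u +
      ((4 : ℤ)) • fp1 x y (mul (mul u v) w) +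
      ((1 : ℤ)) • fp2 x y v w u +
      ((-7 : ℤ)) • fp1 x y (mul (mul u w) v) +
      ((7 : ℤ)) • fp1 x y (mul (mul v w) u) +
      ((2 : ℤ)) • fp3 w v x y u +
      ((-1 : ℤ)) • fp1 v w (mul (mul u x) y) +
      ((-1 : ℤ)) • fp2 v w x y u +
      ((1 : ℤ)) • fp1 v w (mul (mul u y) x) +
      ((-1 : ℤ)) • fp0 (mul v w) x y u +
      ((-10 : ℤ)) • fp1 w u (mul (mul x y) v) +
      ((2 : ℤ)) • fp1 w u (mul (mul v x) y) +
      ((2 : ℤ)) • fp2 w u x y v +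
      ((-2 : ℤ)) • fp1 w u (mul (mul v y) x) +
      ((-4 : ℤ)) • fp1 (mul (mul x y) v) w u +
      ((-1 : ℤ)) • fp1 (mul (mul v x) y) w u +
      ((-1 : ℤ)) • fp1 (mul (mul y v) x) w u +
      ((1 : ℤ)) • fp0 (mul u w) x y v +
      ((-1 : ℤ)) • fp3 u w x y v +
      ((2 : ℤ)) • fp0 (mul u v) x y w +
      ((-1 : ℤ)) • fp3 v u x y w +
      ((-2 : ℤ)) • fp1 u v (mul (mul x y) w) +
      ((-1 : ℤ)) • fp1 u v (mul (mul w x) y) +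
      ((-1 : ℤ)) • fp2 u v x y w +
      ((1 : ℤ)) • fp1 u v (mul (mul w y) x) +
      ((-4 : ℤ)) • fp1 (mul x y) v (mul u w) +
      ((-4 : ℤ)) • hanti (mul (mul u w) v) (mul x y) +
      ((10 : ℤ)) • hanti (mul (mul u v) w) (mul x y) +
      ((4 : ℤ)) • fp4 u v w (mul x y) +
      ((12 : ℤ)) • fp4 (mul x y) v w u +
      ((4 : ℤ)) • hanti (mul (mul v w) u) (mul x y) +
      ((-6 : ℤ)) • hanti (mul (mul x y) w) (mul u v) +
      ((-4 : ℤ)) • fp1 u w (mul (mul x y) v) +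
      ((-2 : ℤ)) • fp1 (mul x y) w (mul u v) +
      ((4 : ℤ)) • fp4 u w v (mul x y) +
      ((6 : ℤ)) • fp4 (mul x y) w v u +
      ((-2 : ℤ)) • fp4 u (mul x y) w v +
      ((6 : ℤ)) • fp4 (mul x y) u w v +
      ((-2 : ℤ)) • fp1 (mul (mul x y) w) v u +
      ((-2 : ℤ)) • fp1 v u (mul (mul x y) w) +
      ((2 : ℤ)) • fp1 (mul x y) u (mul v w) +
      ((2 : ℤ)) • fp4 v u w (mul x y) +
      ((-6 : ℤ)) • fp5 (mul (mul x y) u) w v +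
      ((-6 : ℤ)) • fp6 (mul x y) u w v +
      ((6 : ℤ)) • fp4 w u v (mul x y) +
      ((-2 : ℤ)) • fp5 (mul (mul x y) w) v u +
      ((-2 : ℤ)) • fp4 w (mul x y) v u +
      ((-2 : ℤ)) • fp6 (mul x y) w v u +
      ((2 : ℤ)) • fp4 v w u (mul x y) +
      ((2 : ℤ)) • fp4 v (mul x y) w u +
      ((1 : ℤ)) • fp1 (mul (mul u y) w) x v +
      ((-2 : ℤ)) • hanti (mul (mul u y) v) (mul w x) +
      ((1 : ℤ)) • fp4 v (mul u y) x w +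
      ((-2 : ℤ)) • fp1 v (mul w x) (mul u y) +
      ((1 : ℤ)) • fp6 (mul u y) v x w +
      ((-1 : ℤ)) • fp1 (mul u y) v (mul w x) +
      ((1 : ℤ)) • hanti (mul (mul w x) v) (mul u y) +
      ((1 : ℤ)) • fp1 x v (mul (mul u y) w) +
      ((1 : ℤ)) • fp4 (mul u y) w x v +
      ((-1 : ℤ)) • hanti (mul (mul v x) w) (mul u y) +
      ((-1 : ℤ)) • fp4 x v w (mul u y) +
      ((2 : ℤ)) • fp1 (mul (mul u y) v) x w +
      ((-1 : ℤ)) • hanti (mul (mul u y) w) (mul v x) +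
      ((2 : ℤ)) • fp4 w (mul u y) x v +
      ((-4 : ℤ)) • fp1 w (mul v x) (mul u y) +
      ((2 : ℤ)) • fp6 (mul u y) w x v +
      ((-2 : ℤ)) • fp1 (mul u y) w (mul v x) +
      ((2 : ℤ)) • fp1 x w (mul (mul u y) v) +
      ((-1 : ℤ)) • fp4 (mul u y) v x w +
      ((-3 : ℤ)) • fp4 x w v (mul u y) +
      ((-3 : ℤ)) • fp4 x (mul u y) w v +
      ((-1 : ℤ)) • fp1 (mul (mul v y) w) x u +
      ((2 : ℤ)) • hanti (mul (mul v y) u) (mul w x) +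
      ((-1 : ℤ)) • fp4 u (mul v y) x w +
      ((2 : ℤ)) • fp1 u (mul w x) (mul v y) +
      ((-1 : ℤ)) • fp6 (mul v y) u x w +
      ((1 : ℤ)) • fp1 (mul v y) u (mul w x) +
      ((-1 : ℤ)) • hanti (mul (mul w x) u) (mul v y) +
      ((-1 : ℤ)) • fp1 x u (mul (mul v y) w) +
      ((-1 : ℤ)) • fp4 (mul v y) w x u +
      ((1 : ℤ)) • hanti (mul (mul u x) w) (mul v y) +
      ((1 : ℤ)) • fp4 x u w (mul v y) +
      ((2 : ℤ)) • fp1 (mul y w) x (mul u v) +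
      ((-2 : ℤ)) • fp5 (mul (mul u v) x) y w +
      ((2 : ℤ)) • hanti (mul (mul u v) x) (mul w y) +
      ((2 : ℤ)) • fp1 (mul x w) y (mul u v) +
      ((2 : ℤ)) • fp5 (mul (mul u v) y) x w +
      ((-2 : ℤ)) • hanti (mul (mul u v) y) (mul w x) +
      ((-2 : ℤ)) • fp4 (mul u v) x y w +
      ((-2 : ℤ)) • hanti (mul (mul w y) x) (mul u v) +
      ((4 : ℤ)) • fp6 y (mul u v) x w +
      ((-4 : ℤ)) • fp4 y w x (mul u v) +
      ((-2 : ℤ)) • fp1 y (mul w x) (mul u v) +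
      ((1 : ℤ)) • fp1 (mul (mul w y) v) x u +
      ((1 : ℤ)) • hanti (mul (mul w y) u) (mul v x) +
      ((1 : ℤ)) • fp4 u (mul w y) x v +
      ((1 : ℤ)) • fp6 (mul w y) u x v +
      ((-1 : ℤ)) • fp1 (mul w y) u (mul v x) +
      ((-2 : ℤ)) • hanti (mul (mul v x) u) (mul w y) +
      ((1 : ℤ)) • fp1 x u (mul (mul w y) v) +
      ((-2 : ℤ)) • fp4 (mul w y) v x u +
      ((2 : ℤ)) • hanti (mul (mul u x) v) (mul w y) +
      ((-2 : ℤ)) • fp1 (mul y v) x (mul u w) +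
      ((2 : ℤ)) • fp5 (mul (mul u w) x) y v +
      ((-2 : ℤ)) • hanti (mul (mul u w) x) (mul v y) +
      ((-2 : ℤ)) • fp1 (mul x v) y (mul u w) +
      ((-2 : ℤ)) • fp5 (mul (mul u w) y) x v +
      ((2 : ℤ)) • hanti (mul (mul u w) y) (mul v x) +
      ((2 : ℤ)) • fp4 (mul u w) x y v +
      ((-1 : ℤ)) • hanti (mul (mul v y) x) (mul u w) +
      ((-4 : ℤ)) • fp6 y (mul u w) x v +
      ((4 : ℤ)) • fp4 y v x (mul u w) +
      ((5 : ℤ)) • fp1 y (mul v x) (mul u w) +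
      ((-2 : ℤ)) • fp1 (mul y (mul v w)) x u +
      ((2 : ℤ)) • fp5 (mul u x) y (mul v w) +
      ((-2 : ℤ)) • fp1 (mul x (mul v w)) y u +
      ((-2 : ℤ)) • fp5 (mul u y) x (mul v w) +
      ((2 : ℤ)) • fp4 u x y (mul v w) +
      ((-2 : ℤ)) • fp6 y u x (mul v w) +
      ((2 : ℤ)) • fp1 y u (mul (mul v w) x) +
      ((-2 : ℤ)) • fp6 x u y (mul v w) +
      ((2 : ℤ)) • fp1 x u (mul (mul v w) y) +
      ((3 : ℤ)) • fp4 y (mul v w) x u +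
      ((-3 : ℤ)) • fp4 y x u (mul v w) +
      ((-2 : ℤ)) • fp1 (mul (mul v y) u) x w +
      ((1 : ℤ)) • hanti (mul (mul v y) w) (mul u x) +
      ((-2 : ℤ)) • fp4 w (mul v y) x u +
      ((-2 : ℤ)) • fp6 (mul v y) w x u +
      ((2 : ℤ)) • fp1 (mul v y) w (mul u x) +
      ((-2 : ℤ)) • fp1 x w (mul (mul v y) u) +
      ((1 : ℤ)) • fp4 (mul v y) u x w +
      ((3 : ℤ)) • fp4 x w u (mul v y) +
      ((3 : ℤ)) • fp4 x (mul v y) w u +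
      ((-1 : ℤ)) • fp1 (mul (mul w y) u) x v +
      ((-1 : ℤ)) • hanti (mul (mul w y) v) (mul u x) +
      ((-1 : ℤ)) • fp4 v (mul w y) x u +
      ((-1 : ℤ)) • fp6 (mul w y) v x u +
      ((1 : ℤ)) • fp1 (mul w y) v (mul u x) +
      ((-1 : ℤ)) • fp1 x v (mul (mul w y) u) +
      ((2 : ℤ)) • fp4 (mul w y) u x v +
      ((-1 : ℤ)) • hanti (mul (mul u x) y) (mul v w) +
      ((-3 : ℤ)) • fp1 y (mul v w) (mul u x) +
      ((1 : ℤ)) • fp1 v y (mul (mul u x) w) +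
      ((-1 : ℤ)) • fp1 (mul u x) y (mul v w) +
      ((-2 : ℤ)) • hanti (mul (mul v w) y) (mul u x) +
      ((-1 : ℤ)) • fp4 v y w (mul u x) +
      ((-1 : ℤ)) • fp4 (mul u x) y w v +
      ((-1 : ℤ)) • fp4 v (mul u x) y w +
      ((2 : ℤ)) • fp1 v (mul w y) (mul u x) +
      ((-1 : ℤ)) • fp4 (mul u x) v y w +
      ((2 : ℤ)) • fp5 (mul (mul u x) y) w v +
      ((2 : ℤ)) • fp4 y (mul u x) w v +
      ((2 : ℤ)) • fp1 w y (mul (mul u x) v) +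
      ((2 : ℤ)) • fp6 (mul u x) y w v +
      ((-2 : ℤ)) • fp4 w y v (mul u x) +
      ((-2 : ℤ)) • fp4 w (mul u x) y v +
      ((4 : ℤ)) • fp1 w (mul v y) (mul u x) +
      ((-2 : ℤ)) • fp4 (mul u x) w y v +
      ((1 : ℤ)) • hanti (mul (mul v x) y) (mul u w) +
      ((-1 : ℤ)) • fp1 u y (mul (mul v x) w) +
      ((1 : ℤ)) • fp1 (mul v x) y (mul u w) +
      ((1 : ℤ)) • fp4 u y w (mul v x) +
      ((1 : ℤ)) • fp4 (mul v x) y w u +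
      ((1 : ℤ)) • fp4 u (mul v x) y w +
      ((-2 : ℤ)) • fp1 u (mul w y) (mul v x) +
      ((1 : ℤ)) • fp4 (mul v x) u y w +
      ((2 : ℤ)) • fp4 y (mul u v) x w +
      ((4 : ℤ)) • fp6 (mul u v) y x w +
      ((-4 : ℤ)) • fp1 (mul u v) y (mul w x) +
      ((2 : ℤ)) • hanti (mul (mul w x) y) (mul u v) +
      ((-2 : ℤ)) • fp4 x (mul u v) y w +
      ((-1 : ℤ)) • fp1 (mul u w) x (mul v y) +
      ((-1 : ℤ)) • fp1 (mul x w) u (mul v y) +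
      ((-1 : ℤ)) • fp6 u (mul v y) x w +
      ((1 : ℤ)) • fp4 u w x (mul v y) +
      ((1 : ℤ)) • fp1 u y (mul (mul w x) v) +
      ((2 : ℤ)) • fp1 (mul w x) y (mul u v) +
      ((-1 : ℤ)) • fp4 u y v (mul w x) +
      ((-1 : ℤ)) • fp4 (mul w x) y v u +
      ((-1 : ℤ)) • fp4 u (mul w x) y v +
      ((-1 : ℤ)) • fp4 (mul w x) u y v +
      ((-3 : ℤ)) • fp4 y (mul u w) x v +
      ((-4 : ℤ)) • fp6 (mul u w) y x v +
      ((4 : ℤ)) • fp1 (mul u w) y (mul v x) +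
      ((3 : ℤ)) • fp4 x y v (mul u w) +
      ((3 : ℤ)) • fp4 x (mul u w) y v +
      ((1 : ℤ)) • fp1 (mul u v) x (mul w y) +
      ((1 : ℤ)) • fp1 (mul x v) u (mul w y) +
      ((1 : ℤ)) • fp6 u (mul w y) x v +
      ((-1 : ℤ)) • fp4 u v x (mul w y) +
      ((-4 : ℤ)) • fp5 (mul x y) u (mul v w) +
      ((-4 : ℤ)) • fp4 y u x (mul v w) +
      ((-4 : ℤ)) • fp6 u y x (mul v w) +
      ((4 : ℤ)) • fp1 u y (mul (mul v w) x) +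
      ((-4 : ℤ)) • fp6 x y u (mul v w) +
      ((2 : ℤ)) • fp1 u (mul x y) (mul v w) +
      ((4 : ℤ)) • fp4 x u y (mul v w) +
      ((1 : ℤ)) • fp1 (mul v w) x (mul u y) +
      ((1 : ℤ)) • hanti (mul (mul u y) x) (mul v w) +
      ((1 : ℤ)) • fp1 (mul x w) v (mul u y) +
      ((1 : ℤ)) • fp6 v (mul u y) x w +
      ((-1 : ℤ)) • fp4 v w x (mul u y) +
      ((2 : ℤ)) • fp1 (mul w v) x (mul u y) +
      ((-2 : ℤ)) • fp5 (mul (mul u y) x) w v +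
      ((2 : ℤ)) • fp1 (mul x v) w (mul u y) +
      ((2 : ℤ)) • fp6 w (mul u y) x v +
      ((2 : ℤ)) • fp6 x (mul u y) w v +
      ((-2 : ℤ)) • fp4 w v x (mul u y) +
      ((-2 : ℤ)) • fp5 (mul (mul v x) y) w u +
      ((-2 : ℤ)) • fp4 y (mul v x) w u +
      ((-2 : ℤ)) • fp1 w y (mul (mul v x) u) +
      ((-2 : ℤ)) • fp6 (mul v x) y w u +
      ((2 : ℤ)) • fp4 w y u (mul v x) +
      ((2 : ℤ)) • fp4 w (mul v x) y u +
      ((2 : ℤ)) • fp4 (mul v x) w y u +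
      ((-1 : ℤ)) • fp5 (mul (mul w x) y) v u +
      ((-1 : ℤ)) • fp4 y (mul w x) v u +
      ((-1 : ℤ)) • fp1 v y (mul (mul w x) u) +
      ((-1 : ℤ)) • fp6 (mul w x) y v u +
      ((1 : ℤ)) • fp4 v y u (mul w x) +
      ((1 : ℤ)) • fp4 v (mul w x) y u +
      ((1 : ℤ)) • fp4 (mul w x) v y u +
      ((2 : ℤ)) • fp5 (mul (mul v w) y) x u +
      ((2 : ℤ)) • fp6 (mul v w) y x u +
      ((-2 : ℤ)) • fp1 (mul v w) y (mul u x) +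
      ((-2 : ℤ)) • fp4 (mul v w) x y u +
      ((-1 : ℤ)) • fp1 (mul v u) x (mul w y) +
      ((1 : ℤ)) • fp5 (mul (mul w y) x) v u +
      ((-1 : ℤ)) • fp1 (mul x u) v (mul w y) +
      ((-1 : ℤ)) • fp6 v (mul w y) x u +
      ((1 : ℤ)) • fp6 x (mul w y) v u +
      ((1 : ℤ)) • fp4 v u x (mul w y) +
      ((2 : ℤ)) • fp5 (mul x y) v (mul u w) +
      ((2 : ℤ)) • fp5 (mul v y) x (mul u w) +
      ((3 : ℤ)) • fp4 y x v (mul u w) +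
      ((2 : ℤ)) • fp6 v y x (mul u w) +
      ((-2 : ℤ)) • fp1 v y (mul (mul u w) x) +
      ((2 : ℤ)) • fp6 x y v (mul u w) +
      ((-4 : ℤ)) • fp1 v (mul x y) (mul u w) +
      ((-2 : ℤ)) • fp4 v x y (mul u w) +
      ((-2 : ℤ)) • fp1 (mul w u) x (mul v y) +
      ((2 : ℤ)) • fp5 (mul (mul v y) x) w u +
      ((-2 : ℤ)) • fp1 (mul x u) w (mul v y) +
      ((-2 : ℤ)) • fp6 w (mul v y) x u +
      ((-2 : ℤ)) • fp6 x (mul v y) w u +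
      ((2 : ℤ)) • fp4 w u x (mul v y) +
      ((-2 : ℤ)) • fp5 (mul x y) w (mul u v) +
      ((-2 : ℤ)) • fp5 (mul w y) x (mul u v) +
      ((-6 : ℤ)) • fp4 y x w (mul u v) +
      ((-2 : ℤ)) • fp6 w y x (mul u v) +
      ((2 : ℤ)) • fp1 w y (mul (mul u v) x) +
      ((-2 : ℤ)) • fp6 x y w (mul u v) +
      ((4 : ℤ)) • fp1 w (mul x y) (mul u v) +
      ((2 : ℤ)) • fp4 w x y (mul u v) +
      ((2 : ℤ)) • fp1 (mul (mul u v) y) x w +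
      ((2 : ℤ)) • fp1 (mul u v) w (mul x y) +
      ((2 : ℤ)) • fp1 x w (mul (mul u v) y) +
      ((-2 : ℤ)) • fp4 (mul u v) w y x +
      ((-2 : ℤ)) • fp4 x w y (mul u v) +
      ((-2 : ℤ)) • fp1 (mul (mul u w) y) x v +
      ((-2 : ℤ)) • fp1 (mul u w) v (mul x y) +
      ((-2 : ℤ)) • fp1 x v (mul (mul u w) y) +
      ((2 : ℤ)) • fp4 (mul u w) v y x +
      ((2 : ℤ)) • fp4 x v y (mul u w) +
      ((-2 : ℤ)) • fp1 (mul u y) x (mul v w) +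
      ((2 : ℤ)) • hanti (mul (mul v w) x) (mul u y) +
      ((3 : ℤ)) • fp4 x y u (mul v w) +
      ((2 : ℤ)) • fp4 u (mul v w) y x +
      ((3 : ℤ)) • fp4 x (mul v w) y u +
      ((1 : ℤ)) • fp3 x v u y w +
      ((-1 : ℤ)) • fp7 x u v y w +
      ((1 : ℤ)) • fp4 x u v (mul w y) +
      ((1 : ℤ)) • fp3 x u w y v +
      ((3 : ℤ)) • fp3 x y v w u +
      ((2 : ℤ)) • fp3 x w u y v +
      ((2 : ℤ)) • fp7 x u w y v +
      ((-1 : ℤ)) • fp3 x u v y w +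
      ((-3 : ℤ)) • fp3 x y w v u +
      ((-2 : ℤ)) • fp3 x u y w v +
      ((-3 : ℤ)) • fp3 x y u w v +
      ((1 : ℤ)) • fp4 x (mul y w) v u +
      ((1 : ℤ)) • fp7 x v u y w +
      ((-1 : ℤ)) • fp4 x v u (mul w y) +
      ((-1 : ℤ)) • fp3 x v w y u +
      ((-2 : ℤ)) • fp4 x (mul v u) y w +
      ((-2 : ℤ)) • fp6 x (mul v w) y u +
      ((-2 : ℤ)) • fp3 x w v y u +
      ((-2 : ℤ)) • fp3 x w y v u +
      ((-2 : ℤ)) • fp7 x v w y u +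
      ((-2 : ℤ)) • fp7 x y w v u +
      ((2 : ℤ)) • fp3 x v y w u +
      ((-1 : ℤ)) • fp3 y v u x w +
      ((1 : ℤ)) • fp7 y u v x w +
      ((-1 : ℤ)) • fp4 y u v (mul w x) +
      ((-1 : ℤ)) • fp3 y u w x v +
      ((-2 : ℤ)) • fp3 y w u x v +
      ((-2 : ℤ)) • fp7 y u w x v +
      ((2 : ℤ)) • fp4 y u w (mul v x) +
      ((1 : ℤ)) • fp3 y u v x w +
      ((3 : ℤ)) • fp3 y x w v u +
      ((2 : ℤ)) • fp3 y u x w v +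
      ((3 : ℤ)) • fp3 y x u w v +
      ((-1 : ℤ)) • fp4 y (mul x w) v u +
      ((-1 : ℤ)) • fp7 y v u x w +
      ((1 : ℤ)) • fp4 y v u (mul w x) +
      ((1 : ℤ)) • fp3 y v w x u +
      ((2 : ℤ)) • fp4 y (mul v u) x w +
      ((-2 : ℤ)) • fp6 y (mul w x) v u +
      ((2 : ℤ)) • fp6 y (mul v w) x u +
      ((2 : ℤ)) • fp3 y w v x u +
      ((2 : ℤ)) • fp3 y w x v u +
      ((2 : ℤ)) • fp7 y v w x u +
      ((-2 : ℤ)) • fp4 y v w (mul u x) +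
      ((2 : ℤ)) • fp7 y x w v u +
      ((-2 : ℤ)) • fp3 y v x w u +
      ((-2 : ℤ)) • fp3 y x v w u

/-- If `(A, mul)` is a Maltsev algebra and `α` is an algebra
morphism, then `A_α = (A, α ∘ [·,·,·], α)` with
`[x,y,z] = 2(xy)z − (zx)y − (yz)x` is a multiplicative Hom-Lie triple
system. -/
theorem maltsev_gives_homLie_triple_system
    {k A : Type*} [Field k] [CharZero k] [AddCommGroup A] [Module k A]
    (mul : A →ₗ[k] A →ₗ[k] A)
    (hanti : ∀ x y : A, mul x y = - mul y x)
    (hmaltsev : ∀ x y z : A,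
      (mul (mul x y) (mul x z) + mul (mul (mul x z) x) y
          + mul (mul y (mul x z)) x)
        = mul (mul (mul x y) z + mul (mul z x) y + mul (mul y z) x) x)
    (α : A →ₗ[k] A)
    (hα : ∀ x y : A, α (mul x y) = mul (α x) (α y)) :
    -- left anti-symmetry
    (∀ u v w : A, loosTripleTwist mul α u v w = - loosTripleTwist mul α v u w) ∧
    -- the ternary Jacobi identity
    (∀ u v w : A,
      loosTripleTwist mul α u v w + loosTripleTwist mul α w u v
        + loosTripleTwist mul α v w u = 0) ∧
    -- the ternary Hom-Nambu identity with both twisting maps equal to α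
    (∀ u v w x y : A,
      loosTripleTwist mul α (α x) (α y) (loosTripleTwist mul α u v w)
        = loosTripleTwist mul α (loosTripleTwist mul α x y u) (α v) (α w)
          + loosTripleTwist mul α (α u) (loosTripleTwist mul α x y v) (α w)
          + loosTripleTwist mul α (α u) (α v) (loosTripleTwist mul α x y w)) ∧
    -- multiplicativity
    (∀ x y z : A,
      α (loosTripleTwist mul α x y z)
        = loosTripleTwist mul α (α x) (α y) (α z)) := by
  have ltt : ∀ a b c : A, loosTripleTwist mul α a b c = α (loosT mul a b c) :=
    fun _ _ _ => rfl
  have hTα : ∀ a b c : A, loosT mul (α a) (α b) (α c) = α (loosT mul a b c) := by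
    intro a b c
    simp only [loosT, map_sub, map_zsmul, hα]
  refine ⟨?_, ?_, ?_, ?_⟩
  · intro u v w
    rw [ltt, ltt, ← map_neg]
    congr 1
    have h1 : mul (mul u v) w = - mul (mul v u) w := by
      rw [hanti u v]; simp only [map_neg, LinearMap.neg_apply]
    have h2 : mul (mul w u) v = - mul (mul u w) v := by
      rw [hanti w u]; simp only [map_neg, LinearMap.neg_apply]
    have h3 : mul (mul v w) u = - mul (mul w v) u := by
      rw [hanti v w]; simp only [map_neg, LinearMap.neg_apply]
    simp only [loosT]
    linear_combination (norm := module) (2:ℤ) • h1 - h2 - h3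
  · intro u v w
    rw [ltt, ltt, ltt, ← map_add, ← map_add,
      show loosT mul u v w + loosT mul w u v + loosT mul v w u = 0 by
        simp only [loosT]; module,
      map_zero]
  · intro u v w x y
    simp only [ltt, hTα]
    rw [loos_key mul hanti hmaltsev u v w x y]
    simp only [map_add]
  · intro x y z
    simp only [ltt, hTα]
end

section
/- Let (A, (·,·,·), α) be a ternary totally Hom-associative algebra over a field k of characteristic 0 whose two twisting maps are both equal to α. Define the triple product {x,y,z} = (x,y,z) + (z,y,x). Then J(A) = (A, {·,·,·}, α) is a Hom-Jordan triple system; and if A is multiplicative, then so is J(A). -/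
/-- If `(A, t, α)` is a ternary totally Hom-associative
algebra with both twisting maps equal to `α`, then `J(A) = (A, {·,·,·}, α)`
with `{x,y,z} = (x,y,z) + (z,y,x)` is a Hom-Jordan triple system; and if `A`
is multiplicative, then so is `J(A)`. -/
theorem ternaryHomAssoc_gives_homJordan
    {k A : Type*} [Field k] [CharZero k] [AddCommGroup A] [Module k A]
    (t : A →ₗ[k] A →ₗ[k] A →ₗ[k] A) (α : A →ₗ[k] A)
    (hassoc : ∀ u v w x y : A,
      t (t u v w) (α x) (α y) = t (α u) (t v w x) (α y) ∧
      t (α u) (t v w x) (α y) = t (α u) (α v) (t w x y)) :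
    -- outer-symmetry of {x,y,z} = (x,y,z) + (z,y,x)
    (∀ x y z : A, t x y z + t z y x = t z y x + t x y z) ∧
    -- the Hom-Jordan triple identity for {·,·,·} with twisting maps (α, α)
    (∀ u v w x y : A,
      (t (α x) (α y) (t u v w + t w v u) + t (t u v w + t w v u) (α y) (α x))
        - (t (α u) (α v) (t x y w + t w y x) + t (t x y w + t w y x) (α v) (α u))
        = (t (t x y u + t u y x) (α v) (α w) + t (α w) (α v) (t x y u + t u y x))
          - (t (α u) (t y x v + t v x y) (α w)
              + t (α w) (t y x v + t v x y) (α u))) ∧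
    -- if A is multiplicative, then so is J(A)
    ((∀ x y z : A, α (t x y z) = t (α x) (α y) (α z)) →
      ∀ x y z : A,
        α (t x y z + t z y x) = t (α x) (α y) (α z) + t (α z) (α y) (α x)) := by
  have h1 : ∀ u v w x y : A, t (t u v w) (α x) (α y) = t (α u) (t v w x) (α y) :=
    fun u v w x y => (hassoc u v w x y).1
  have h2 : ∀ u v w x y : A, t (α u) (α v) (t w x y) = t (α u) (t v w x) (α y) :=
    fun u v w x y => (hassoc u v w x y).2.symm
  refine ⟨fun x y z => add_comm _ _, fun u v w x y => ?_, fun hm x y z => by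
    simp [map_add, hm]⟩
  simp only [map_add, LinearMap.add_apply, h1, h2]
  abel
end

section
/- Let (A, μ, α) be a Hom-associative algebra over a field k of characteristic 0. Define the triple product (x,y,z) = (xy)α(z) (where juxtaposition denotes μ). Then A_T = (A, (·,·,·), α²) with both twisting maps equal to α² is a ternary totally Hom-associative algebra; and if A is multiplicative, then so is A_T. -/
/-- If `(A, μ, α)` is a Hom-associative algebra, then
`A_T = (A, (x,y,z) = (xy)α(z), α²)` is a ternary totally Hom-associative
algebra; and if `A` is multiplicative, then so is `A_T`. -/
theorem homAssociative_gives_ternaryHomAssoc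
    {k A : Type*} [Field k] [CharZero k] [AddCommGroup A] [Module k A]
    (mul : A →ₗ[k] A →ₗ[k] A) (α : A →ₗ[k] A)
    (hassoc : ∀ x y z : A, mul (mul x y) (α z) = mul (α x) (mul y z)) :
    -- ternary Hom-associativity of (x,y,z) = (xy)α(z) with twisting maps (α², α²)
    (∀ u v w x y : A,
      mul (mul (mul (mul u v) (α w)) (α (α x))) (α (α (α y)))
        = mul (mul (α (α u)) (mul (mul v w) (α x))) (α (α (α y))) ∧
      mul (mul (α (α u)) (mul (mul v w) (α x))) (α (α (α y)))
        = mul (mul (α (α u)) (α (α v))) (α (mul (mul w x) (α y)))) ∧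
    -- if A is multiplicative, then so is A_T
    ((∀ x y : A, α (mul x y) = mul (α x) (α y)) →
      ∀ x y z : A,
        α (α (mul (mul x y) (α z)))
          = mul (mul (α (α x)) (α (α y))) (α (α (α z)))) := by
  constructor
  · intro u v w x y
    constructor
    · rw [hassoc u v w, hassoc (α u) (mul v w) (α x)]
    · rw [hassoc (α (α u)) (mul (mul v w) (α x)) (α (α y)),
          hassoc (α (α u)) (α (α v)) (mul (mul w x) (α y)),
          ← hassoc (α v) (mul w x) (α y), ← hassoc v w x]
  · intro hmul x y z
    simp only [hmul]
end

section
/- Let (L, [·,…,·], α) be a multiplicative n-ary Hom-Nambu algebra over a field k of characteristic 0. Define the (2n−1)-ary product [x₁,…,x_{2n−1}]^{(1)} = [[x₁,…,xₙ], α(x_{n+1}),…,α(x_{2n−1})]. Then L¹ = (L, [·,…,·]^{(1)}, α²) is a multiplicative (2n−1)-ary Hom-Nambu algebra. -/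
/-!
Write `[z]⁽¹⁾ = [a₀, …, a_{n−1}]` with `a₀ = [z₀, …, z_{n−1}]` and `a_j = α z_{n−1+j}`
(`outerArgs`). Multiplicativity gives `α [z]⁽¹⁾ = [α z]⁽¹⁾`, and appending an argument `c` to
`x₀, …, x_{2n−3}` just appends `α c` to a fixed tuple `u` (`outerPrefix`). Hence the left-hand
side of the `(2n−1)`-ary identity is `[α² u, [outerArgs (α y)]]`, which the `n`-ary identity
splits into `n` terms. For `t ≥ 1` the `t`-th term contains `[α u, α² y_s] = α [x, y_s]⁽¹⁾`
(`s = n − 1 + t`) and is the summand of the `(2n−1)`-ary identity in which `[x, y_s]⁽¹⁾` sits in an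
outer slot. The `0`-th term
contains `[α u, [α y₀, …, α y_{n−1}]]`; expanding it by the identity once more and distributing
by multilinearity gives the `n` summands in which `[x, y_l]⁽¹⁾` sits in an inner slot.
-/

open scoped BigOperators

/-- The `(2n−1)`-ary product
`[x₁,…,x_{2n−1}]⁽¹⁾ = [[x₁,…,xₙ], α(x_{n+1}),…,α(x_{2n−1})]`
built from an `(m+1)`-ary product `br` and a map `α` (here `n = m + 1`,
`2n − 1 = 2m + 1`). -/
def higherBracket {V : Type*} [AddCommGroup V] {m : ℕ}
    (br : (Fin (m + 1) → V) → V) (α : V → V)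
    (x : Fin (2 * m + 1) → V) : V :=
  br (Fin.cons
    (br (fun i : Fin (m + 1) => x (Fin.castLE (by omega) i)))
    (fun i : Fin m => α (x ⟨m + 1 + (i : ℕ), by have := i.isLt; omega⟩)))

open Function

section NambuRHS

variable {V : Type*} [AddCommGroup V] {m : ℕ}

theorem nambuRHS_const (br : (Fin (m + 1) → V) → V) (α : V → V) (x : Fin m → V)
    (y : Fin (m + 1) → V) :
    nambuRHS br (fun _ => α) x y = ∑ i, br (update (α ∘ y) i (br (Fin.snoc x (y i)))) := by
  refine Finset.sum_congr rfl fun i _ => congrArg br (funext fun j => ?_)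
  rcases lt_trichotomy (j : ℕ) i with h | h | h
  · rw [dif_pos h, update_of_ne (by omega)]; rfl
  · rw [dif_neg (by omega), dif_pos h, Fin.ext h, update_self]
  · rw [dif_neg (by omega), dif_neg (by omega), update_of_ne (by omega)]; rfl

theorem homJacobian_const_eq_zero_iff (br : (Fin (m + 1) → V) → V) (α : V → V)
    (x : Fin m → V) (y : Fin (m + 1) → V) :
    homJacobian br (fun _ => α) x y = 0 ↔
      br (Fin.snoc (α ∘ x) (br y)) = ∑ i, br (update (α ∘ y) i (br (Fin.snoc x (y i)))) := by
  rw [homJacobian, sub_eq_zero, nambuRHS_const]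
  rfl

end NambuRHS

def innerIdx (m : ℕ) : Fin (m + 1) → Fin (2 * m + 1) := Fin.castLE (by omega)

def outerIdx (m : ℕ) (j : Fin m) : Fin (2 * m + 1) := ⟨m + 1 + j, by omega⟩

theorem innerIdx_injective (m : ℕ) : Injective (innerIdx m) := Fin.castLE_injective _

theorem outerIdx_injective (m : ℕ) : Injective (outerIdx m) := fun i j h => by
  simpa [outerIdx, Fin.ext_iff] using h

theorem innerIdx_ne_outerIdx {m : ℕ} (i : Fin (m + 1)) (j : Fin m) :
    innerIdx m i ≠ outerIdx m j := by
  simp only [innerIdx, outerIdx, ne_eq, Fin.ext_iff, Fin.val_castLE]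
  omega

theorem sum_univ_eq_innerIdx_add_outerIdx {M : Type*} [AddCommMonoid M] {m : ℕ}
    (F : Fin (2 * m + 1) → M) :
    ∑ i, F i = ∑ i, F (innerIdx m i) + ∑ j, F (outerIdx m j) := by
  rw [← Equiv.sum_comp (finCongr (by omega : m + 1 + m = 2 * m + 1)) F, Fin.sum_univ_add]
  rfl

section OuterArgs

variable {V : Type*} {m : ℕ} (br : (Fin (m + 1) → V) → V) (α : V → V)

def outerArgs (z : Fin (2 * m + 1) → V) : Fin (m + 1) → V :=
  Fin.cons (br (z ∘ innerIdx m)) (α ∘ z ∘ outerIdx m)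

def outerPrefix (x : Fin (2 * m) → V) (j : Fin m) : V :=
  if h : (j : ℕ) = 0 then br fun i => x ⟨i, by omega⟩ else α (x ⟨m + j, by omega⟩)

theorem outerArgs_zero (z : Fin (2 * m + 1) → V) : outerArgs br α z 0 = br (z ∘ innerIdx m) :=
  rfl

theorem outerArgs_succ (z : Fin (2 * m + 1) → V) (j : Fin m) :
    outerArgs br α z j.succ = α (z (outerIdx m j)) :=
  rfl

theorem outerArgs_update_innerIdx (z : Fin (2 * m + 1) → V) (i : Fin (m + 1)) (c : V) :
    outerArgs br α (update z (innerIdx m i) c)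
      = update (outerArgs br α z) 0 (br (update (z ∘ innerIdx m) i c)) := by
  rw [outerArgs, outerArgs, Fin.update_cons_zero,
    update_comp_eq_of_injective _ (innerIdx_injective m),
    update_comp_eq_of_forall_ne _ _ fun j => (innerIdx_ne_outerIdx i j).symm]

theorem outerArgs_update_outerIdx (z : Fin (2 * m + 1) → V) (j : Fin m) (c : V) :
    outerArgs br α (update z (outerIdx m j) c) = update (outerArgs br α z) j.succ (α c) := by
  rw [outerArgs, outerArgs, ← Fin.cons_update, update_comp_eq_of_injective _ (outerIdx_injective m),
    update_comp_eq_of_forall_ne _ _ fun i => innerIdx_ne_outerIdx i j, comp_update]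

variable {br α}

theorem outerArgs_comp (hmul : ∀ x, α (br x) = br (α ∘ x)) (z : Fin (2 * m + 1) → V) :
    outerArgs br α (α ∘ z) = α ∘ outerArgs br α z := by
  rw [outerArgs, outerArgs, Fin.comp_cons, hmul]
  rfl

theorem outerPrefix_comp (hmul : ∀ x, α (br x) = br (α ∘ x)) (x : Fin (2 * m) → V) :
    outerPrefix br α (α ∘ x) = α ∘ outerPrefix br α x := by
  funext j
  by_cases hj : (j : ℕ) = 0
  · rw [comp_apply, outerPrefix, outerPrefix, dif_pos hj, dif_pos hj, hmul]
    rfl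
  · rw [comp_apply, outerPrefix, outerPrefix, dif_neg hj, dif_neg hj]
    rfl

theorem outerArgs_snoc (hm : 1 ≤ m) (x : Fin (2 * m) → V) (c : V) :
    outerArgs br α (Fin.snoc x c) = Fin.snoc (outerPrefix br α x) (α c) := by
  refine funext (Fin.cases ?_ fun j => ?_)
  · rw [outerArgs_zero, show (0 : Fin (m + 1)) = Fin.castSucc ⟨0, hm⟩ from rfl, Fin.snoc_castSucc,
      outerPrefix, dif_pos rfl]
    exact congrArg br (funext fun i => Fin.snoc_castSucc (α := fun _ => V) c x ⟨i, by omega⟩)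
  · rw [outerArgs_succ]
    by_cases h : (j : ℕ) + 1 < m
    · rw [show j.succ = Fin.castSucc ⟨j + 1, h⟩ from rfl, Fin.snoc_castSucc, outerPrefix,
        dif_neg (Nat.succ_ne_zero _),
        show outerIdx m j = Fin.castSucc ⟨m + 1 + j, by omega⟩ from rfl, Fin.snoc_castSucc]
      simp only [add_assoc, Nat.add_comm 1]
    · rw [show j.succ = Fin.last m from Fin.ext (by simp only [Fin.val_succ, Fin.val_last]; omega),
        show outerIdx m j = Fin.last (2 * m) from Fin.ext (by simp only [outerIdx, Fin.val_last]; omega),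
        Fin.snoc_last, Fin.snoc_last]

end OuterArgs

section HigherBracket

variable {V : Type*} [AddCommGroup V] {m : ℕ} {br : (Fin (m + 1) → V) → V} {α : V → V}

theorem higherBracket_eq_outerArgs (z : Fin (2 * m + 1) → V) :
    higherBracket br α z = br (outerArgs br α z) :=
  rfl

theorem higherBracket_comp (hmul : ∀ x, α (br x) = br (α ∘ x)) (z : Fin (2 * m + 1) → V) :
    α (higherBracket br α z) = higherBracket br α (α ∘ z) := by
  rw [higherBracket_eq_outerArgs, higherBracket_eq_outerArgs, outerArgs_comp hmul, hmul]

theorem higherBracket_snoc (hm : 1 ≤ m) (x : Fin (2 * m) → V) (c : V) :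
    higherBracket br α (Fin.snoc x c) = br (Fin.snoc (outerPrefix br α x) (α c)) := by
  rw [higherBracket_eq_outerArgs, outerArgs_snoc hm]

end HigherBracket

section HomNambu

variable {R V : Type*} [Semiring R] [AddCommGroup V] [Module R V] {m : ℕ}
  {br : MultilinearMap R (fun _ : Fin (m + 1) => V) V} {α : V → V}

theorem higherBracket_homNambu (hm : 1 ≤ m) (hmul : ∀ x, α (br x) = br (α ∘ x))
    (hNambu : ∀ x y, br (Fin.snoc (α ∘ x) (br y))
      = ∑ i, br (update (α ∘ y) i (br (Fin.snoc x (y i)))))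
    (x : Fin (2 * m) → V) (y : Fin (2 * m + 1) → V) :
    higherBracket br α (Fin.snoc (α ∘ α ∘ x) (higherBracket br α y))
      = ∑ l, higherBracket br α (update (α ∘ α ∘ y) l (higherBracket br α (Fin.snoc x (y l)))) := by
  rw [higherBracket_snoc hm, outerPrefix_comp hmul, outerPrefix_comp hmul, higherBracket_comp hmul,
    higherBracket_eq_outerArgs (α ∘ y), hNambu, ← outerArgs_comp hmul, Fin.sum_univ_succ,
    sum_univ_eq_innerIdx_add_outerIdx]
  congr 1
  · rw [outerArgs_zero, hNambu, MultilinearMap.map_update_sum]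
    refine Finset.sum_congr rfl fun l _ => ?_
    rw [higherBracket_eq_outerArgs, outerArgs_update_innerIdx, higherBracket_snoc hm]
    rfl
  · refine Finset.sum_congr rfl fun j _ => ?_
    rw [outerArgs_succ, ← Fin.comp_snoc, ← hmul, higherBracket_eq_outerArgs,
      outerArgs_update_outerIdx, higherBracket_snoc hm]
    rfl

end HomNambu

theorem higher_arity_homNambu_general
    {k V : Type*} [Field k] [AddCommGroup V] [Module k V]
    {m : ℕ} (hm : 1 ≤ m)
    (br : MultilinearMap k (fun _ : Fin (m + 1) => V) V)
    (α : V →ₗ[k] V)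
    (hmul : ∀ x : Fin (m + 1) → V, α (br x) = br (fun i => α (x i)))
    (hNambu : ∀ (x : Fin m → V) (y : Fin (m + 1) → V),
      homJacobian (fun v => br v) (fun _ v => α v) x y = 0) :
    -- L¹ satisfies the (2n−1)-ary Hom-Nambu identity, all twisting maps α²
    (∀ (x : Fin (2 * m) → V) (y : Fin (2 * m + 1) → V),
      homJacobian (higherBracket (fun v => br v) (fun v => α v))
        (fun _ v => α (α v)) x y = 0) ∧
    -- L¹ is multiplicative with respect to α²
    (∀ x : Fin (2 * m + 1) → V,
      α (α (higherBracket (fun v => br v) (fun v => α v) x))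
        = higherBracket (fun v => br v) (fun v => α v)
            (fun i => α (α (x i)))) := by
  refine ⟨fun x y => ?_, fun x => ?_⟩
  · rw [homJacobian_const_eq_zero_iff]
    exact higherBracket_homNambu hm hmul
      (fun x y => (homJacobian_const_eq_zero_iff _ _ _ _).mp (hNambu x y)) x y
  · rw [higherBracket_comp hmul, higherBracket_comp hmul]
    rfl

/-- If `(L, br, α)` is a multiplicative `n`-ary Hom-Nambu
algebra (`n = m+1 ≥ 2`), then `L¹ = (L, [·,…,·]⁽¹⁾, α²)`, where
`[x₁,…,x_{2n−1}]⁽¹⁾ = [[x₁,…,xₙ], α(x_{n+1}),…,α(x_{2n−1})]`, is a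
multiplicative `(2n−1)`-ary Hom-Nambu algebra. -/
theorem higher_arity_homNambu
    {k V : Type*} [Field k] [CharZero k] [AddCommGroup V] [Module k V]
    {m : ℕ} (hm : 1 ≤ m)
    (br : MultilinearMap k (fun _ : Fin (m + 1) => V) V)
    (α : V →ₗ[k] V)
    (hmul : ∀ x : Fin (m + 1) → V, α (br x) = br (fun i => α (x i)))
    (hNambu : ∀ (x : Fin m → V) (y : Fin (m + 1) → V),
      homJacobian (fun v => br v) (fun _ v => α v) x y = 0) :
    -- L¹ satisfies the (2n−1)-ary Hom-Nambu identity, all twisting maps α²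
    (∀ (x : Fin (2 * m) → V) (y : Fin (2 * m + 1) → V),
      homJacobian (higherBracket (fun v => br v) (fun v => α v))
        (fun _ v => α (α v)) x y = 0) ∧
    -- L¹ is multiplicative with respect to α²
    (∀ x : Fin (2 * m + 1) → V,
      α (α (higherBracket (fun v => br v) (fun v => α v) x))
        = higherBracket (fun v => br v) (fun v => α v)
            (fun i => α (α (x i)))) :=
  higher_arity_homNambu_general hm br α hmul hNambu
end

section
/- Let (L, [·,…,·], (α₁,…,α_{n−1})) be an n-ary Hom-Nambu algebra over a field k of characteristic 0 with n ≥ 3, and suppose a ∈ L satisfies α₁(a) = a and [a, x₂, …, x_{n−1}, a] = 0 for all x₂,…,x_{n−1} ∈ L. Define the (n−1)-ary product [x₁,…,x_{n−1}]' = [a, x₁,…,x_{n−1}]. Then L' = (L, [·,…,·]', (α₂,…,α_{n−1})) is an (n−1)-ary Hom-Nambu algebra; and if L is multiplicative, then so is L'. In particular, if the product of L is anti-symmetric (so L is an n-ary Hom-Nambu-Lie algebra) and α₁(a) = a, then L' is an (n−1)-ary Hom-Nambu-Lie algebra. -/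
open scoped BigOperators

/-- Let `(L, br, (α₁,…,α_{n−1}))` be an `n`-ary Hom-Nambu
algebra with `n = m + 3 ≥ 3`.  Suppose `a ∈ L` satisfies `α₁(a) = a` and
`[a, x₂, …, x_{n−1}, a] = 0` for all `xᵢ`.  Then the `(n−1)`-ary product
`[x₁,…,x_{n−1}]' = [a, x₁, …, x_{n−1}]` with twisting maps `(α₂,…,α_{n−1})`
makes `L' ` an `(n−1)`-ary Hom-Nambu algebra; if `L` is multiplicative then so
is `L'`; and if the product of `L` is anti-symmetric then so is that of `L'`
(so an `n`-ary Hom-Nambu-Lie algebra reduces to an `(n−1)`-ary Hom-Nambu-Lie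
algebra). -/
theorem lower_arity_homNambu
    {k V : Type*} [Field k] [CharZero k] [AddCommGroup V] [Module k V]
    {m : ℕ}
    (br : MultilinearMap k (fun _ : Fin (m + 2 + 1) => V) V)
    (α : Fin (m + 2) → V →ₗ[k] V)
    (hNambu : ∀ (x : Fin (m + 2) → V) (y : Fin (m + 2 + 1) → V),
      homJacobian (fun v => br v) (fun i v => α i v) x y = 0)
    (a : V) (ha : α 0 a = a)
    (hza : ∀ x : Fin (m + 1) → V, br (Fin.cons a (Fin.snoc x a)) = 0) :
    -- L' satisfies the (n−1)-ary Hom-Nambu identity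
    (∀ (x : Fin (m + 1) → V) (y : Fin (m + 1 + 1) → V),
      homJacobian (fun v => br (Fin.cons a v))
        (fun i v => α i.succ v) x y = 0) ∧
    -- if L is multiplicative, then so is L'
    (∀ a0 : V →ₗ[k] V, (∀ i, α i = a0) →
      (∀ v : Fin (m + 2 + 1) → V, a0 (br v) = br (fun i => a0 (v i))) →
      ∀ v : Fin (m + 1 + 1) → V,
        a0 (br (Fin.cons a v)) = br (Fin.cons a (fun i => a0 (v i)))) ∧
    -- if the product of L is anti-symmetric, then so is the product of L'
    ((∀ (σ : Equiv.Perm (Fin (m + 2 + 1))) (v : Fin (m + 2 + 1) → V),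
        br v = (Equiv.Perm.sign σ : ℤ) • br (fun i => v (σ i))) →
      ∀ (σ : Equiv.Perm (Fin (m + 1 + 1))) (v : Fin (m + 1 + 1) → V),
        br (Fin.cons a v)
          = (Equiv.Perm.sign σ : ℤ) • br (Fin.cons a (fun i => v (σ i)))) := by
  refine ⟨?_, ?_, ?_⟩
  · -- Nambu identity for the reduced bracket
    intro x y
    have key : homJacobian (fun v => br (Fin.cons a v))
        (fun (i : Fin (m + 1)) (v : V) => α i.succ v) x y
        = homJacobian (fun v => br v) (fun i v => α i v)
            (Fin.cons a x) (Fin.cons a y) := by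
      unfold homJacobian
      beta_reduce
      have h1 : (fun i : Fin (m + 2) => α i ((Fin.cons a x : Fin (m + 1 + 1) → V) i))
          = Fin.cons a (fun i : Fin (m + 1) => α i.succ (x i)) := by
        funext i
        refine Fin.cases ?_ (fun j => ?_) i
        · simp [ha]
        · simp
      congr 1
      · rw [h1, ← Fin.cons_snoc_eq_snoc_cons]
      · -- equality of the RHS sums
        unfold nambuRHS
        conv_rhs => rw [Fin.sum_univ_succ]
        beta_reduce
        have h0 : (br fun j : Fin (m + 2 + 1) =>
            if h : (j : ℕ) < (((0 : Fin (m + 2 + 1))) : ℕ) then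
              α ⟨j, by have := (0 : Fin (m + 2 + 1)).isLt; omega⟩ ((Fin.cons a y : Fin (m + 2 + 1) → V) j)
            else if h2 : (j : ℕ) = (((0 : Fin (m + 2 + 1))) : ℕ) then
              br (Fin.snoc (Fin.cons a x) ((Fin.cons a y : Fin (m + 2 + 1) → V) 0))
            else
              α ⟨(j : ℕ) - 1, by have := j.isLt; omega⟩ ((Fin.cons a y : Fin (m + 2 + 1) → V) j)) = 0 := by
          refine br.map_coord_zero (0 : Fin (m + 2 + 1)) ?_
          beta_reduce
          rw [dif_neg (by simp), dif_pos (by simp), Fin.cons_zero,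
            ← Fin.cons_snoc_eq_snoc_cons]
          exact hza x
        rw [h0, zero_add]
        refine Finset.sum_congr rfl fun j _ => ?_
        beta_reduce
        congr 1
        funext l
        refine Fin.cases ?_ (fun p => ?_) l
        · rw [Fin.cons_zero, dif_pos (by simp)]
          have h3 : (⟨((0 : Fin (m + 2 + 1)) : ℕ), by simp⟩ : Fin (m + 2)) = 0 := rfl
          rw [h3, Fin.cons_zero, ha]
        · rw [Fin.cons_succ]
          rcases lt_trichotomy (p : ℕ) (j : ℕ) with hc | hc | hc
          · rw [dif_pos hc, dif_pos (by simp [Fin.val_succ]; omega)]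
            have h3 : (⟨(p : ℕ), by omega⟩ : Fin (m + 1)).succ
                = (⟨((p.succ : Fin (m + 2 + 1)) : ℕ), by simp [Fin.val_succ]; omega⟩
                    : Fin (m + 2)) := by
              ext; simp
            rw [h3, Fin.cons_succ]
          · rw [dif_neg (by omega), dif_pos hc,
              dif_neg (by simp [Fin.val_succ]; omega),
              dif_pos (by simp [Fin.val_succ]; omega)]
            rw [Fin.cons_succ, Fin.cons_snoc_eq_snoc_cons]
          · rw [dif_neg (by omega), dif_neg (by omega),
              dif_neg (by simp [Fin.val_succ]; omega),
              dif_neg (by simp [Fin.val_succ]; omega)]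
            have h3 : (⟨(p : ℕ) - 1, by omega⟩ : Fin (m + 1)).succ
                = (⟨((p.succ : Fin (m + 2 + 1)) : ℕ) - 1, by simp [Fin.val_succ]⟩
                    : Fin (m + 2)) := by
              ext; simp; omega
            rw [h3, Fin.cons_succ]
    rw [key]
    exact hNambu (Fin.cons a x) (Fin.cons a y)
  · -- multiplicativity
    intro a0 hα hmul v
    have haa : a0 a = a := by rw [← hα 0]; exact ha
    rw [hmul]
    congr 1
    funext i
    refine Fin.cases ?_ (fun p => ?_) i
    · simp [haa]
    · simp
  · -- anti-symmetry
    intro hanti σ v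
    rw [hanti (Equiv.Perm.decomposeFin.symm (0, σ)) (Fin.cons a v),
      Equiv.Perm.decomposeFin.symm_sign, if_pos rfl, one_mul]
    refine congrArg _ (congrArg _ (funext fun i => ?_))
    refine Fin.cases ?_ (fun p => ?_) i
    · simp [Equiv.Perm.decomposeFin_symm_apply_zero]
    · simp [Equiv.Perm.decomposeFin_symm_apply_succ]
end
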